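/- arXiv:2602.18219 — 2 statements merged into one kernel-verified Lean document; each statement's English description precedes it below -/
import Mathlib

section
/- Let K : ℝ² → (0,∞) satisfy λ|z|^{-2-α} ≤ K(z) ≤ Λ|z|^{-2-α} with 0 < λ ≤ Λ, α ∈ (0,1). Fix R > 0 and define for integers k ≥ 1: μ_k = ∫_ℝ (1 − cos(kt)) K(t, 0) dt − ∫_ℝ (1 + cos(kt)) K(t, 2R) dt. Then 0 < liminf_{k→∞} μ_k / k^{1+α} and limsup_{k→∞} μ_k / k^{1+α} < ∞; more precisely liminf μ_k/k^{1+α} ≥ λ ∫_ℝ (1 − cos t)|t|^{-2-α} dt and limsup μ_k/k^{1+α} ≤ Λ ∫_ℝ (1 − cos t)|t|^{-2-α} dt. -/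
/-!
The substitution `t ↦ t / k` gives `∫ (1 - cos (k t)) |t|^(-2-α) dt = k^(1+α) I` with
`I = ∫ (1 - cos t) |t|^(-2-α) dt`, so the bounds on `K` trap the first integral in `μ_k` between
`λ k^(1+α) I` and `Λ k^(1+α) I`. Away from the axis `K(·, 2R)` is dominated by the integrable
`Λ (t² + 4R²)^(-(2+α)/2)`, so the second integral lies in `[0, C]` with `C` independent of `k`.
Dividing by `k^(1+α)` gives the bounds on the liminf and the limsup.
-/

open MeasureTheory Real Filter

open Set Topology

theorem IntegrableOn.integrable_comp_abs {E : Type*} [NormedAddCommGroup E] {f : ℝ → E}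
    (hf : IntegrableOn f (Ioi 0)) : Integrable fun x : ℝ => f |x| := by
  have h_Ioi : IntegrableOn (fun x : ℝ => f |x|) (Ioi 0) :=
    hf.congr_fun (fun x hx => by rw [abs_of_pos hx]) measurableSet_Ioi
  have h_Iic : IntegrableOn (fun x : ℝ => f |x|) (Iic 0) := by
    have hneg : MeasurableEmbedding fun x : ℝ => -x := (Homeomorph.neg ℝ).measurableEmbedding
    rw [← Measure.map_neg_eq_self (volume : Measure ℝ), hneg.integrableOn_map_iff]
    simp_rw [Function.comp_def, abs_neg, neg_preimage, neg_Iic, neg_zero]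
    exact Iff.mpr integrableOn_Ici_iff_integrableOn_Ioi h_Ioi
  simpa only [Iic_union_Ioi, integrableOn_univ] using h_Iic.union h_Ioi

theorem integral_bounds_of_ae_le_of_ae_le {X : Type*} [MeasurableSpace X] {μ : Measure X}
    {f g : X → ℝ} {a b : ℝ} (hf : AEStronglyMeasurable f μ) (hg : Integrable g μ)
    (hlow : ∀ᵐ x ∂μ, a * g x ≤ f x) (hup : ∀ᵐ x ∂μ, f x ≤ b * g x) :
    a * ∫ x, g x ∂μ ≤ ∫ x, f x ∂μ ∧ ∫ x, f x ∂μ ≤ b * ∫ x, g x ∂μ := by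
  have hfi : Integrable f μ := integrable_of_le_of_le hf hlow hup (hg.const_mul a) (hg.const_mul b)
  rw [← integral_const_mul, ← integral_const_mul]
  exact ⟨integral_mono_ae (hg.const_mul a) hfi hlow, integral_mono_ae hfi (hg.const_mul b) hup⟩

theorem le_liminf_div_and_limsup_div_le {ι : Type*} {l : Filter ι} [l.NeBot] {u c : ι → ℝ}
    {a b C : ℝ} (hc : Tendsto c l atTop) (hlow : ∀ᶠ i in l, a * c i - C ≤ u i)
    (hup : ∀ᶠ i in l, u i ≤ b * c i) :
    a ≤ liminf (fun i => u i / c i) l ∧ limsup (fun i => u i / c i) l ≤ b := by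
  have hpos : ∀ᶠ i in l, 0 < c i := hc.eventually_gt_atTop 0
  have hlow' : ∀ᶠ i in l, a - C / c i ≤ u i / c i := by
    filter_upwards [hlow, hpos] with i hi hci
    rwa [le_div_iff₀ hci, sub_mul, div_mul_cancel₀ _ hci.ne']
  have hup' : ∀ᶠ i in l, u i / c i ≤ b := by
    filter_upwards [hup, hpos] with i hi hci
    rwa [div_le_iff₀ hci]
  have hlim : Tendsto (fun i => a - C / c i) l (𝓝 a) := by
    simpa using tendsto_const_nhds.sub (tendsto_const_nhds.div_atTop hc)
  constructor
  · calc a = liminf (fun i => a - C / c i) l := hlim.liminf_eq.symm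
      _ ≤ liminf (fun i => u i / c i) l :=
        liminf_le_liminf hlow' hlim.isBoundedUnder_ge
          (isBoundedUnder_of_eventually_le hup').isCoboundedUnder_ge
  · exact limsup_le_of_le (hlim.isBoundedUnder_ge.mono_ge hlow').isCoboundedUnder_le hup'

theorem comp_mul_left_mul_abs_rpow_eq (f : ℝ → ℝ) (α : ℝ) {k : ℝ} (hk : 0 < k) (t : ℝ) :
    f (k * t) * |t| ^ (-(2:ℝ) - α) = k ^ (2 + α) * (f (k * t) * |k * t| ^ (-(2:ℝ) - α)) := by
  rw [abs_mul, abs_of_pos hk, mul_rpow hk.le (abs_nonneg t), mul_left_comm, ← mul_assoc (k ^ _),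
    ← rpow_add hk, show 2 + α + (-(2:ℝ) - α) = 0 by ring, rpow_zero, one_mul]

theorem Integrable.comp_mul_left_mul_abs_rpow {f : ℝ → ℝ} {α : ℝ}
    (hf : Integrable fun t : ℝ => f t * |t| ^ (-(2:ℝ) - α)) {k : ℝ} (hk : 0 < k) :
    Integrable fun t : ℝ => f (k * t) * |t| ^ (-(2:ℝ) - α) := by
  simp_rw [comp_mul_left_mul_abs_rpow_eq f α hk]
  exact (hf.comp_mul_left' hk.ne').const_mul _

theorem integral_comp_mul_left_mul_abs_rpow (f : ℝ → ℝ) (α : ℝ) {k : ℝ} (hk : 0 < k) :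
    ∫ t : ℝ, f (k * t) * |t| ^ (-(2:ℝ) - α) =
      k ^ (1 + α) * ∫ t : ℝ, f t * |t| ^ (-(2:ℝ) - α) := by
  simp_rw [comp_mul_left_mul_abs_rpow_eq f α hk]
  rw [integral_const_mul, Measure.integral_comp_mul_left (fun t => f t * |t| ^ (-(2:ℝ) - α)),
    abs_of_pos (inv_pos.2 hk), smul_eq_mul, ← mul_assoc, ← rpow_neg_one, ← rpow_add hk]
  ring_nf

theorem integrableOn_Ioi_one_sub_cos_mul_rpow {α : ℝ} (hα : α ∈ Ioo (-1 : ℝ) 1) :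
    IntegrableOn (fun s : ℝ => (1 - cos s) * s ^ (-(2:ℝ) - α)) (Ioi 0) := by
  obtain ⟨hα₀, hα₁⟩ := hα
  have hmeas : AEStronglyMeasurable (fun s : ℝ => (1 - cos s) * s ^ (-(2:ℝ) - α)) :=
    (by fun_prop : Measurable fun s : ℝ => (1 - cos s) * s ^ (-(2:ℝ) - α)).aestronglyMeasurable
  have h_Ioc : IntegrableOn (fun s : ℝ => (1 - cos s) * s ^ (-(2:ℝ) - α)) (Ioc 0 1) := by
    have hdom : IntegrableOn (fun s : ℝ => s ^ (-α)) (Ioc 0 1) := by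
      rw [integrableOn_Ioc_iff_integrableOn_Ioo,
        intervalIntegral.integrableOn_Ioo_rpow_iff one_pos]
      linarith
    refine hdom.mono' hmeas.restrict ((ae_restrict_iff' measurableSet_Ioc).mpr
      (ae_of_all _ fun s ⟨hs₀, _⟩ => ?_))
    have hcos : 1 - cos s ≤ s ^ (2:ℝ) := by
      rw [rpow_two]; nlinarith [one_sub_sq_div_two_le_cos (x := s)]
    rw [norm_of_nonneg (by nlinarith [cos_le_one s, rpow_nonneg hs₀.le (-(2:ℝ) - α)])]
    calc (1 - cos s) * s ^ (-(2:ℝ) - α) ≤ s ^ (2:ℝ) * s ^ (-(2:ℝ) - α) := by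
          gcongr
      _ = s ^ (-α) := by rw [← rpow_add hs₀]; ring_nf
  have h_Ioi : IntegrableOn (fun s : ℝ => (1 - cos s) * s ^ (-(2:ℝ) - α)) (Ioi 1) := by
    have hdom : IntegrableOn (fun s : ℝ => 2 * s ^ (-(2:ℝ) - α)) (Ioi 1) :=
      ((integrableOn_Ioi_rpow_iff one_pos).mpr (by linarith)).const_mul 2
    refine hdom.mono' hmeas.restrict ((ae_restrict_iff' measurableSet_Ioi).mpr
      (ae_of_all _ fun s (hs : 1 < s) => ?_))
    have hpow : 0 ≤ s ^ (-(2:ℝ) - α) := rpow_nonneg (by linarith) _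
    rw [norm_of_nonneg (mul_nonneg (by linarith [cos_le_one s]) hpow)]
    gcongr
    linarith [neg_one_le_cos s]
  simpa only [Ioc_union_Ioi_eq_Ioi zero_le_one] using h_Ioc.union h_Ioi

theorem integrable_one_sub_cos_mul_abs_rpow {α : ℝ} (hα : α ∈ Ioo (-1 : ℝ) 1) :
    Integrable fun t : ℝ => (1 - cos t) * |t| ^ (-(2:ℝ) - α) := by
  simpa only [cos_abs] using
    IntegrableOn.integrable_comp_abs (integrableOn_Ioi_one_sub_cos_mul_rpow hα)

theorem integral_one_sub_cos_mul_abs_rpow_pos {α : ℝ} (hα : α ∈ Ioo (-1 : ℝ) 1) :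
    0 < ∫ t : ℝ, (1 - cos t) * |t| ^ (-(2:ℝ) - α) := by
  have hnonneg : 0 ≤ fun t : ℝ => (1 - cos t) * |t| ^ (-(2:ℝ) - α) := fun t =>
    mul_nonneg (sub_nonneg.2 (cos_le_one t)) (rpow_nonneg (abs_nonneg t) _)
  rw [integral_pos_iff_support_of_nonneg hnonneg (integrable_one_sub_cos_mul_abs_rpow hα)]
  refine lt_of_lt_of_le (by simp [pi_pos]) (measure_mono (s := Ioc 0 π) fun t ht => ?_)
  have hcos : cos t < 1 := cos_zero ▸ cos_lt_cos_of_nonneg_of_le_pi le_rfl ht.2 ht.1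
  exact (mul_pos (sub_pos.2 hcos) (rpow_pos_of_pos (abs_pos.2 ht.1.ne') _)).ne'

theorem integrable_sqrt_sq_add_sq_rpow {α c : ℝ} (hα : -1 < α) (hc : c ≠ 0) :
    Integrable fun t : ℝ => √(t ^ 2 + c ^ 2) ^ (-(2:ℝ) - α) := by
  have h := ((integrable_rpow_neg_one_add_norm_sq (E := ℝ) (μ := volume) (r := 2 + α)
    (by simp; linarith)).comp_div hc).const_mul (|c| ^ (-(2:ℝ) - α))
  refine h.congr (ae_of_all _ fun t => ?_)
  dsimp only
  have hsqrt : √(t ^ 2 + c ^ 2) = |c| * √(1 + ‖t / c‖ ^ 2) := by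
    rw [← sqrt_sq_eq_abs, ← sqrt_mul (sq_nonneg c), norm_div, div_pow, norm_eq_abs, norm_eq_abs,
      sq_abs, sq_abs]
    congr 1
    field_simp
    ring
  rw [hsqrt, mul_rpow (abs_nonneg c) (sqrt_nonneg _), sqrt_eq_rpow, ← rpow_mul (by positivity)]
  ring_nf

theorem integral_one_sub_cos_mul_bounds {α lam Λ k : ℝ} (hα : α ∈ Ioo (-1 : ℝ) 1) (hk : 0 < k)
    {g : ℝ → ℝ} (hg : AEStronglyMeasurable g)
    (hbounds : ∀ t ≠ 0, lam * |t| ^ (-(2:ℝ) - α) ≤ g t ∧ g t ≤ Λ * |t| ^ (-(2:ℝ) - α)) :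
    lam * (k ^ (1 + α) * ∫ t : ℝ, (1 - cos t) * |t| ^ (-(2:ℝ) - α)) ≤
        ∫ t : ℝ, (1 - cos (k * t)) * g t ∧
      ∫ t : ℝ, (1 - cos (k * t)) * g t ≤
        Λ * (k ^ (1 + α) * ∫ t : ℝ, (1 - cos t) * |t| ^ (-(2:ℝ) - α)) := by
  rw [← integral_comp_mul_left_mul_abs_rpow (fun t => 1 - cos t) α hk]
  refine integral_bounds_of_ae_le_of_ae_le
    ((by fun_prop : Continuous fun t => 1 - cos (k * t)).aestronglyMeasurable.mul hg)
    (Integrable.comp_mul_left_mul_abs_rpow (integrable_one_sub_cos_mul_abs_rpow hα) hk) ?_ ?_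
  all_goals
    filter_upwards [volume.ae_ne 0] with t ht
    have hcos : 0 ≤ 1 - cos (k * t) := sub_nonneg.2 (cos_le_one _)
  · linarith [mul_le_mul_of_nonneg_left (hbounds t ht).1 hcos]
  · linarith [mul_le_mul_of_nonneg_left (hbounds t ht).2 hcos]

theorem integral_one_add_cos_mul_bounds {α Λ c k : ℝ} (hα : -1 < α) (hc : c ≠ 0)
    {g : ℝ → ℝ} (hg : AEStronglyMeasurable g)
    (hbounds : ∀ t, 0 ≤ g t ∧ g t ≤ Λ * √(t ^ 2 + c ^ 2) ^ (-(2:ℝ) - α)) :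
    0 ≤ ∫ t : ℝ, (1 + cos (k * t)) * g t ∧
      ∫ t : ℝ, (1 + cos (k * t)) * g t ≤ 2 * Λ * ∫ t : ℝ, √(t ^ 2 + c ^ 2) ^ (-(2:ℝ) - α) := by
  have hf : AEStronglyMeasurable fun t => (1 + cos (k * t)) * g t :=
    (by fun_prop : Continuous fun t => 1 + cos (k * t)).aestronglyMeasurable.mul hg
  simpa using integral_bounds_of_ae_le_of_ae_le (a := 0) (b := 2 * Λ) hf
    (integrable_sqrt_sq_add_sq_rpow hα hc)
    (ae_of_all _ fun t => by
      simpa using mul_nonneg (by linarith [neg_one_le_cos (k * t)]) (hbounds t).1)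
    (ae_of_all _ fun t => by
      linarith [mul_nonneg (sub_nonneg.2 (cos_le_one (k * t))) (hbounds t).1, (hbounds t).2])

theorem stmt12_general (α lam Λ R : ℝ) (hα : α ∈ Set.Ioo (0:ℝ) 1) (hlam : 0 < lam)
    (hR : 0 < R)
    (K : ℝ × ℝ → ℝ) (hKmeas : Measurable K)
    (hlower : ∀ z : ℝ × ℝ, z ≠ 0 →
      lam * (Real.sqrt (z.1 ^ 2 + z.2 ^ 2)) ^ (-(2:ℝ) - α) ≤ K z)
    (hupper : ∀ z : ℝ × ℝ, z ≠ 0 →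
      K z ≤ Λ * (Real.sqrt (z.1 ^ 2 + z.2 ^ 2)) ^ (-(2:ℝ) - α))
    (μ : ℕ → ℝ)
    (hμ : ∀ k : ℕ, μ k = (∫ t : ℝ, (1 - Real.cos ((k : ℝ) * t)) * K (t, 0)) -
      ∫ t : ℝ, (1 + Real.cos ((k : ℝ) * t)) * K (t, 2 * R)) :
    0 < ∫ t : ℝ, (1 - Real.cos t) * |t| ^ (-(2:ℝ) - α) ∧
    lam * (∫ t : ℝ, (1 - Real.cos t) * |t| ^ (-(2:ℝ) - α)) ≤
      liminf (fun k : ℕ => μ k / (k : ℝ) ^ ((1:ℝ) + α)) atTop ∧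
    limsup (fun k : ℕ => μ k / (k : ℝ) ^ ((1:ℝ) + α)) atTop ≤
      Λ * ∫ t : ℝ, (1 - Real.cos t) * |t| ^ (-(2:ℝ) - α) := by
  have hα' : α ∈ Ioo (-1 : ℝ) 1 := ⟨by linarith [hα.1], hα.2⟩
  have hslice (c : ℝ) : AEStronglyMeasurable fun t => K (t, c) :=
    (hKmeas.comp (measurable_id.prodMk measurable_const)).aestronglyMeasurable
  have hK_axis (t : ℝ) (ht : t ≠ 0) :
      lam * |t| ^ (-(2:ℝ) - α) ≤ K (t, 0) ∧ K (t, 0) ≤ Λ * |t| ^ (-(2:ℝ) - α) := by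
    have hz : (t, (0:ℝ)) ≠ 0 := by simp [ht]
    simpa [sqrt_sq_eq_abs] using And.intro (hlower _ hz) (hupper _ hz)
  have hK_off (t : ℝ) :
      0 ≤ K (t, 2 * R) ∧ K (t, 2 * R) ≤ Λ * √(t ^ 2 + (2 * R) ^ 2) ^ (-(2:ℝ) - α) := by
    have hz : (t, 2 * R) ≠ 0 := by simp [hR.ne']
    exact ⟨le_trans (by positivity) (hlower _ hz), hupper _ hz⟩
  set I := ∫ t : ℝ, (1 - cos t) * |t| ^ (-(2:ℝ) - α)
  set C := 2 * Λ * ∫ t : ℝ, √(t ^ 2 + (2 * R) ^ 2) ^ (-(2:ℝ) - α)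
  have hμ_bounds (k : ℕ) (hk : 0 < k) :
      lam * I * (k : ℝ) ^ (1 + α) - C ≤ μ k ∧ μ k ≤ Λ * I * (k : ℝ) ^ (1 + α) := by
    obtain ⟨hA_low, hA_up⟩ :=
      integral_one_sub_cos_mul_bounds hα' (Nat.cast_pos.2 hk) (hslice 0) hK_axis
    obtain ⟨hB_low, hB_up⟩ := integral_one_add_cos_mul_bounds (k := (k : ℝ)) hα'.1
      (mul_ne_zero two_ne_zero hR.ne') (hslice (2 * R)) hK_off
    rw [hμ k]
    constructor <;> linarith
  refine ⟨integral_one_sub_cos_mul_abs_rpow_pos hα',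
    le_liminf_div_and_limsup_div_le (C := C) ?_ ?_ ?_⟩
  · exact (tendsto_rpow_atTop (y := 1 + α) (by linarith [hα.1])).comp tendsto_natCast_atTop_atTop
  · filter_upwards [eventually_gt_atTop 0] with k hk using (hμ_bounds k hk).1
  · filter_upwards [eventually_gt_atTop 0] with k hk using (hμ_bounds k hk).2

theorem stmt12 (α lam Λ R : ℝ) (hα : α ∈ Set.Ioo (0:ℝ) 1) (hlam : 0 < lam)
    (hΛ : 0 < Λ) (hle : lam ≤ Λ) (hR : 0 < R)
    (K : ℝ × ℝ → ℝ) (hKmeas : Measurable K)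
    (hlower : ∀ z : ℝ × ℝ, z ≠ 0 →
      lam * (Real.sqrt (z.1 ^ 2 + z.2 ^ 2)) ^ (-(2:ℝ) - α) ≤ K z)
    (hupper : ∀ z : ℝ × ℝ, z ≠ 0 →
      K z ≤ Λ * (Real.sqrt (z.1 ^ 2 + z.2 ^ 2)) ^ (-(2:ℝ) - α))
    (μ : ℕ → ℝ)
    (hμ : ∀ k : ℕ, μ k = (∫ t : ℝ, (1 - Real.cos ((k : ℝ) * t)) * K (t, 0)) -
      ∫ t : ℝ, (1 + Real.cos ((k : ℝ) * t)) * K (t, 2 * R)) :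
    0 < ∫ t : ℝ, (1 - Real.cos t) * |t| ^ (-(2:ℝ) - α) ∧
    lam * (∫ t : ℝ, (1 - Real.cos t) * |t| ^ (-(2:ℝ) - α)) ≤
      liminf (fun k : ℕ => μ k / (k : ℝ) ^ ((1:ℝ) + α)) atTop ∧
    limsup (fun k : ℕ => μ k / (k : ℝ) ^ ((1:ℝ) + α)) atTop ≤
      Λ * ∫ t : ℝ, (1 - Real.cos t) * |t| ^ (-(2:ℝ) - α) :=
  stmt12_general α lam Λ R hα hlam hR K hKmeas hlower hupper μ hμ
end

section
/- Let E ⊂ ℝⁿ be 2π-periodic in x₁ and of the form E = {x : |x'| < u(x₁)} for a nonnegative measurable 2π-periodic function u, and suppose K(x) ≥ λ|x|^{−n−α} for some λ > 0, α ∈ (0,1). If P_K[E] < ∞, then the function u^{n−1} belongs to the fractional Sobolev space W^{α,1}(−π, π); in fact [u^{n−1}]_{W^{α,1}(−π,π)} ≤ C_{n,α}(1 + (1/λ) P_K[E]) for a constant C_{n,α} depending only on n and α. -/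
open MeasureTheory Set Real
open scoped ENNReal

/-- The periodic anisotropic nonlocal perimeter
`P_K[E] = ∫_{E ∩ Ω} ∫_{Eᶜ} K(x - y) dx dy`, with `Ω = {x : -π < x₁ < π}`. -/
noncomputable def perK {m : ℕ} (K : ℝ × EuclideanSpace ℝ (Fin m) → ℝ)
    (E : Set (ℝ × EuclideanSpace ℝ (Fin m))) : ℝ≥0∞ :=
  ∫⁻ x in E ∩ {x : ℝ × EuclideanSpace ℝ (Fin m) | -π < x.1 ∧ x.1 < π},
    ∫⁻ y in Eᶜ, ENNReal.ofReal (K (x - y))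

/-!
Write `d = n - 1` for the dimension of the cross-section `x'` and
`k(x, y) = |x - y| ^ (-(1 + α))`. Splitting `|a - b| = (a - b)₊ + (b - a)₊` and using the
symmetry of `k`, the seminorm is
`2 ∫∫ (u x ^ d - u y ^ d)₊ k(x, y)`, and `|B₁| (u x ^ d - u y ^ d)₊` is the volume of the annulus
`{u y ≤ ‖x'‖ < u x}`. Hence `|B₁|` times half the seminorm equals
`∫_{(x, x') ∈ E ∩ Ω} ∫_{u y ≤ ‖x'‖} k(x, y)`.

For `(x, x') ∈ E` and `u y ≤ ‖x'‖`, the fibre of `Eᶜ` over `y` contains `{‖y'‖ ≥ ‖x'‖}`, which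
contains a ball of radius `r = |x - y|` within distance `2r` of `x'`. There
`K((x, x') - (y, y')) ≥ λ (3r) ^ (-(d + 1) - α)`, so the fibre contributes at least
`λ 3 ^ (-(d + 1) - α) |B₁| r ^ (-(1 + α))`. Integrating over `E ∩ Ω` bounds
`λ 3 ^ (-(d + 1) - α) |B₁|²` times half the seminorm by `P_K[E]`.
-/

open Metric Module

theorem setLIntegral_prod_eq_lintegral_setLIntegral {X Y : Type*} [MeasurableSpace X]
    [MeasurableSpace Y] {μ : Measure X} {ν : Measure Y} [SFinite ν] {t : Set (X × Y)}
    (ht : MeasurableSet t) {f : X × Y → ℝ≥0∞} (hf : Measurable f) :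
    ∫⁻ w in t, f w ∂μ.prod ν = ∫⁻ x, ∫⁻ y in Prod.mk x ⁻¹' t, f (x, y) ∂ν ∂μ := by
  rw [← lintegral_indicator ht, lintegral_prod _ (hf.indicator ht).aemeasurable]
  refine lintegral_congr fun x => ?_
  rw [← lintegral_indicator (measurable_prodMk_left ht)]
  rfl

theorem measurable_setLIntegral_setOf_le_norm_inter {E : Type*} [NormedAddCommGroup E]
    [MeasurableSpace E] [OpensMeasurableSpace E] {u : ℝ → ℝ} (hu : Measurable u) (I : Set ℝ)
    {k : ℝ → ℝ → ℝ≥0∞} (hk : Measurable (Function.uncurry k)) :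
    Measurable fun z : ℝ × E => ∫⁻ y in {y | u y ≤ ‖z.2‖} ∩ I, k z.1 y := by
  simp only [← setLIntegral_indicator (measurableSet_le hu measurable_const)]
  exact Measurable.lintegral_prod_right ((hk.comp (measurable_fst.fst.prodMk
    measurable_snd)).indicator (measurableSet_le (hu.comp measurable_snd)
    measurable_fst.snd.norm))

theorem ENNReal.ofReal_abs_sub (a b : ℝ) :
    ENNReal.ofReal |a - b| = ENNReal.ofReal (a - b) + ENNReal.ofReal (b - a) := by
  rcases le_total a b with h | h
  · rw [abs_of_nonpos (by linarith), neg_sub, ENNReal.ofReal_of_nonpos (p := a - b) (by linarith),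
      zero_add]
  · rw [abs_of_nonneg (by linarith), ENNReal.ofReal_of_nonpos (p := b - a) (by linarith),
      add_zero]

theorem lintegral_lintegral_ofReal_abs_sub_mul {X : Type*} [MeasurableSpace X] {ν : Measure X}
    [SFinite ν] {f : X → ℝ} (hf : Measurable f) {k : X → X → ℝ≥0∞}
    (hk : Measurable (Function.uncurry k)) (hsymm : ∀ x y, k x y = k y x) :
    ∫⁻ x, ∫⁻ y, ENNReal.ofReal |f x - f y| * k x y ∂ν ∂ν =
      2 * ∫⁻ x, ∫⁻ y, ENNReal.ofReal (f x - f y) * k x y ∂ν ∂ν := by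
  set F : X → X → ℝ≥0∞ := fun x y => ENNReal.ofReal (f x - f y) * k x y
  have hF : Measurable (Function.uncurry F) :=
    (by fun_prop : Measurable fun p : X × X => f p.1 - f p.2).ennreal_ofReal.mul hk
  have hswap : ∫⁻ x, ∫⁻ y, F y x ∂ν ∂ν = ∫⁻ x, ∫⁻ y, F x y ∂ν ∂ν :=
    lintegral_lintegral_swap (hF.comp measurable_swap).aemeasurable
  calc ∫⁻ x, ∫⁻ y, ENNReal.ofReal |f x - f y| * k x y ∂ν ∂ν
      = ∫⁻ x, ∫⁻ y, (F x y + F y x) ∂ν ∂ν := by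
        simp only [F, ENNReal.ofReal_abs_sub, add_mul, hsymm]
    _ = ∫⁻ x, ∫⁻ y, F x y ∂ν ∂ν + ∫⁻ x, ∫⁻ y, F y x ∂ν ∂ν := by
        rw [← lintegral_add_left hF.lintegral_prod_right]
        exact lintegral_congr fun x => lintegral_add_left (hF.comp measurable_prodMk_left) _
    _ = 2 * ∫⁻ x, ∫⁻ y, F x y ∂ν ∂ν := by rw [hswap, two_mul]

theorem ENNReal.le_ofReal_div_of_ofReal_mul_le {a b : ℝ} (ha : 0 < a) {x : ℝ≥0∞}
    (h : ENNReal.ofReal a * x ≤ ENNReal.ofReal b) : x ≤ ENNReal.ofReal (b / a) := by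
  rw [ENNReal.ofReal_div_of_pos ha, ENNReal.le_div_iff_mul_le (Or.inl (by simpa using ha))
    (Or.inl ENNReal.ofReal_ne_top), mul_comm]
  exact h

section FiniteDimensional

variable {E : Type*} [NormedAddCommGroup E] [NormedSpace ℝ E] [Nontrivial E]

theorem exists_sameRay_norm_eq (p : E) {r : ℝ} (hr : 0 ≤ r) : ∃ v, SameRay ℝ p v ∧ ‖v‖ = r := by
  rcases eq_or_ne p 0 with rfl | hp
  · obtain ⟨v, hv⟩ := exists_norm_eq E hr
    exact ⟨v, SameRay.zero_left v, hv⟩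
  · refine ⟨(r / ‖p‖) • p, SameRay.sameRay_nonneg_smul_right p (by positivity), ?_⟩
    rw [norm_smul, Real.norm_of_nonneg (by positivity), div_mul_cancel₀ _ (norm_ne_zero_iff.mpr hp)]

theorem exists_ball_subset_ball_inter_norm_le (p : E) {r : ℝ} (hr : 0 ≤ r) :
    ∃ c, ball c r ⊆ ball p (2 * r) ∩ {y | ‖p‖ ≤ ‖y‖} := by
  obtain ⟨v, hpv, hv⟩ := exists_sameRay_norm_eq p hr
  refine ⟨p + v, fun y hy => ⟨?_, ?_⟩⟩
  · rw [mem_ball, dist_eq_norm] at hy ⊢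
    calc ‖y - p‖ ≤ ‖y - (p + v)‖ + ‖v‖ := by
          simpa [sub_add_eq_sub_sub] using norm_sub_le (y - (p + v)) (-v)
      _ < 2 * r := by linarith
  · rw [mem_ball, dist_eq_norm] at hy
    have := norm_sub_norm_le (p + v) y
    rw [hpv.norm_add, hv, norm_sub_rev] at this
    exact (by linarith : ‖p‖ ≤ ‖y‖)

variable [FiniteDimensional ℝ E] [MeasurableSpace E] [BorelSpace E]
  (μ : Measure E) [μ.IsAddHaarMeasure]

theorem addHaar_setOf_le_norm_lt {a b : ℝ} (ha : 0 ≤ a) (hb : 0 ≤ b) :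
    μ {x | a ≤ ‖x‖ ∧ ‖x‖ < b} =
      ENNReal.ofReal (b ^ finrank ℝ E - a ^ finrank ℝ E) * μ (ball 0 1) := by
  rcases le_or_gt a b with hab | hba
  · have hset : {x : E | a ≤ ‖x‖ ∧ ‖x‖ < b} = ball 0 b \ ball 0 a := by
      ext x
      simp [and_comm]
    rw [hset, measure_sdiff (ball_subset_ball hab) measurableSet_ball.nullMeasurableSet
      measure_ball_lt_top.ne, Measure.addHaar_ball _ _ ha, Measure.addHaar_ball _ _ hb,
      ← ENNReal.sub_mul (fun _ _ => measure_ball_lt_top.ne), ENNReal.ofReal_sub _ (by positivity)]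
  · have hset : {x : E | a ≤ ‖x‖ ∧ ‖x‖ < b} = ∅ :=
      eq_empty_of_forall_notMem fun x hx => by linarith [hx.1, hx.2]
    rw [hset, measure_empty, ENNReal.ofReal_of_nonpos, zero_mul]
    linarith [pow_le_pow_left₀ hb hba.le (finrank ℝ E)]

theorem ofReal_mul_addHaar_ball_le_setLIntegral (p : E) {r s : ℝ} (hr : 0 < r) (hs : s ≤ 0) :
    ENNReal.ofReal ((3 * r) ^ s * r ^ finrank ℝ E) * μ (ball 0 1) ≤
      ∫⁻ y in {y | ‖p‖ ≤ ‖y‖}, ENNReal.ofReal (√(r ^ 2 + ‖p - y‖ ^ 2) ^ s) ∂μ := by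
  obtain ⟨c, hc⟩ := exists_ball_subset_ball_inter_norm_le p hr.le
  have hbound : ∀ y ∈ ball c r,
      ENNReal.ofReal ((3 * r) ^ s) ≤ ENNReal.ofReal (√(r ^ 2 + ‖p - y‖ ^ 2) ^ s) := by
    intro y hy
    have hpy : ‖p - y‖ < 2 * r := by
      simpa [dist_eq_norm, norm_sub_rev] using (hc hy).1
    have hsqrt : √(r ^ 2 + ‖p - y‖ ^ 2) ≤ 3 * r := by
      rw [Real.sqrt_le_left (by positivity)]
      nlinarith [norm_nonneg (p - y)]
    exact ENNReal.ofReal_le_ofReal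
      (Real.rpow_le_rpow_of_nonpos (by positivity) hsqrt hs)
  calc ENNReal.ofReal ((3 * r) ^ s * r ^ finrank ℝ E) * μ (ball 0 1)
      = ENNReal.ofReal ((3 * r) ^ s) * μ (ball c r) := by
        rw [Measure.addHaar_ball _ _ hr.le, ENNReal.ofReal_mul (by positivity), mul_assoc]
    _ = ∫⁻ _ in ball c r, ENNReal.ofReal ((3 * r) ^ s) ∂μ := (setLIntegral_const _ _).symm
    _ ≤ ∫⁻ y in ball c r, ENNReal.ofReal (√(r ^ 2 + ‖p - y‖ ^ 2) ^ s) ∂μ :=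
        setLIntegral_mono' measurableSet_ball hbound
    _ ≤ _ := lintegral_mono_set fun y hy => (hc hy).2

theorem ofReal_rpow_abs_sub_mul_le_setLIntegral {α a : ℝ} (hα : -1 < α) (x y : ℝ) {p : E}
    (ha : a ≤ ‖p‖) :
    ENNReal.ofReal (3 ^ (-((finrank ℝ E : ℝ) + 1) - α) * |x - y| ^ (-(1 + α))) * μ (ball 0 1) ≤
      ∫⁻ q in {q | a ≤ ‖q‖},
        ENNReal.ofReal (√((x - y) ^ 2 + ‖p - q‖ ^ 2) ^ (-((finrank ℝ E : ℝ) + 1) - α)) ∂μ := by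
  set s : ℝ := -((finrank ℝ E : ℝ) + 1) - α
  rcases eq_or_ne x y with rfl | hxy
  -- `0 ^ t = 0` for `t ≠ 0`, so the diagonal `x = y` contributes nothing
  · rw [sub_self, abs_zero, Real.zero_rpow (by linarith), mul_zero, ENNReal.ofReal_zero, zero_mul]
    exact bot_le
  have hr : 0 < |x - y| := abs_pos.mpr (sub_ne_zero.mpr hxy)
  have hscale : (3 * |x - y|) ^ s * |x - y| ^ finrank ℝ E = 3 ^ s * |x - y| ^ (-(1 + α)) := by
    rw [Real.mul_rpow (by norm_num) hr.le, ← Real.rpow_natCast, mul_assoc, ← Real.rpow_add hr]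
    congr 2
    ring
  calc ENNReal.ofReal (3 ^ s * |x - y| ^ (-(1 + α))) * μ (ball 0 1)
      ≤ ∫⁻ q in {q | ‖p‖ ≤ ‖q‖}, ENNReal.ofReal (√(|x - y| ^ 2 + ‖p - q‖ ^ 2) ^ s) ∂μ := by
        rw [← hscale]
        exact ofReal_mul_addHaar_ball_le_setLIntegral μ p hr (by simp only [s]; linarith)
    _ ≤ _ := by
        rw [sq_abs]
        exact lintegral_mono_set fun q hq => ha.trans hq

theorem mul_setLIntegral_le_setLIntegral_compl {α lam : ℝ} (hα : -1 < α) (hlam : 0 ≤ lam)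
    {K : ℝ × E → ℝ}
    (hK : ∀ z : ℝ × E, z ≠ 0 →
      lam * √(z.1 ^ 2 + ‖z.2‖ ^ 2) ^ (-((finrank ℝ E : ℝ) + 1) - α) ≤ K z)
    {u : ℝ → ℝ} (hu : Measurable u) {z : ℝ × E} (hz : ‖z.2‖ < u z.1) :
    ENNReal.ofReal (lam * 3 ^ (-((finrank ℝ E : ℝ) + 1) - α)) * μ (ball 0 1) *
        ∫⁻ y in {y | u y ≤ ‖z.2‖}, ENNReal.ofReal (|z.1 - y| ^ (-(1 + α))) ≤
      ∫⁻ w in {w : ℝ × E | ‖w.2‖ < u w.1}ᶜ, ENNReal.ofReal (K (z - w)) ∂volume.prod μ := by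
  set s : ℝ := -((finrank ℝ E : ℝ) + 1) - α
  set g : ℝ × E → ℝ≥0∞ := fun w =>
    ENNReal.ofReal lam * ENNReal.ofReal (√((z.1 - w.1) ^ 2 + ‖z.2 - w.2‖ ^ 2) ^ s)
  have hS : MeasurableSet {w : ℝ × E | ‖w.2‖ < u w.1}ᶜ :=
    (measurableSet_lt measurable_snd.norm (hu.comp measurable_fst)).compl
  have hg : Measurable g := by fun_prop
  have hgK : ∀ w ∈ {w : ℝ × E | ‖w.2‖ < u w.1}ᶜ, g w ≤ ENNReal.ofReal (K (z - w)) := by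
    intro w hw
    have hzw : z - w ≠ 0 := sub_ne_zero.mpr fun h => hw (h ▸ hz)
    rw [show g w = _ from (ENNReal.ofReal_mul hlam).symm]
    exact ENNReal.ofReal_le_ofReal (by simpa using hK _ hzw)
  calc ENNReal.ofReal (lam * 3 ^ s) * μ (ball 0 1) *
        ∫⁻ y in {y | u y ≤ ‖z.2‖}, ENNReal.ofReal (|z.1 - y| ^ (-(1 + α)))
      = ∫⁻ y in {y | u y ≤ ‖z.2‖}, ENNReal.ofReal lam *
          (ENNReal.ofReal (3 ^ s * |z.1 - y| ^ (-(1 + α))) * μ (ball 0 1)) := by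
        rw [← lintegral_const_mul _ (by fun_prop)]
        refine lintegral_congr fun y => ?_
        rw [ENNReal.ofReal_mul hlam, ENNReal.ofReal_mul (by positivity)]
        ring
    _ ≤ ∫⁻ y in {y | u y ≤ ‖z.2‖}, ∫⁻ q in Prod.mk y ⁻¹' {w : ℝ × E | ‖w.2‖ < u w.1}ᶜ,
          g (y, q) ∂μ := by
        refine setLIntegral_mono' (measurableSet_le hu measurable_const) fun y hy => ?_
        rw [lintegral_const_mul' _ _ ENNReal.ofReal_ne_top]
        gcongr
        exact (ofReal_rpow_abs_sub_mul_le_setLIntegral μ hα z.1 y hy).trans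
          (lintegral_mono_set fun q (hq : u y ≤ ‖q‖) => not_lt.mpr hq)
    _ ≤ ∫⁻ y, ∫⁻ q in Prod.mk y ⁻¹' {w : ℝ × E | ‖w.2‖ < u w.1}ᶜ, g (y, q) ∂μ :=
        setLIntegral_le_lintegral _ _
    _ = ∫⁻ w in {w : ℝ × E | ‖w.2‖ < u w.1}ᶜ, g w ∂volume.prod μ :=
        (setLIntegral_prod_eq_lintegral_setLIntegral hS hg).symm
    _ ≤ _ := setLIntegral_mono' hS hgK

theorem addHaar_ball_mul_lintegral_ofReal_sub_pow_mul {u : ℝ → ℝ} (hu : Measurable u)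
    (hu0 : ∀ t, 0 ≤ u t) (I : Set ℝ) {k : ℝ → ℝ → ℝ≥0∞}
    (hk : Measurable (Function.uncurry k)) :
    μ (ball 0 1) * ∫⁻ x in I, ∫⁻ y in I,
        ENNReal.ofReal (u x ^ finrank ℝ E - u y ^ finrank ℝ E) * k x y =
      ∫⁻ z in {z : ℝ × E | ‖z.2‖ < u z.1}, (∫⁻ y in {y | u y ≤ ‖z.2‖} ∩ I, k z.1 y)
        ∂(volume.restrict I).prod μ := by
  set F : ℝ → E → ℝ → ℝ≥0∞ := fun x q y =>
    {q : E | ‖q‖ < u x}.indicator (fun q => {y | u y ≤ ‖q‖}.indicator (k x) y) q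
  have hF : ∀ x, Measurable fun p : ℝ × E => F x p.2 p.1 := fun x =>
    ((hk.comp (measurable_const.prodMk measurable_fst)).indicator
      (measurableSet_le (hu.comp measurable_fst) measurable_snd.norm)).indicator
      (measurableSet_lt measurable_snd.norm measurable_const)
  have hannulus : ∀ x y, μ (ball 0 1) *
      (ENNReal.ofReal (u x ^ finrank ℝ E - u y ^ finrank ℝ E) * k x y) = ∫⁻ q, F x q y ∂μ := by
    intro x y
    have hset : MeasurableSet {q : E | u y ≤ ‖q‖ ∧ ‖q‖ < u x} :=
      (measurableSet_le measurable_const measurable_norm).inter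
        (measurableSet_lt measurable_norm measurable_const)
    have : (fun q => F x q y) = {q | u y ≤ ‖q‖ ∧ ‖q‖ < u x}.indicator fun _ => k x y := by
      ext q
      by_cases h1 : ‖q‖ < u x <;> by_cases h2 : u y ≤ ‖q‖ <;> simp [F, h1, h2]
    rw [this, lintegral_indicator_const hset, addHaar_setOf_le_norm_lt μ (hu0 y) (hu0 x)]
    ring
  calc μ (ball 0 1) * ∫⁻ x in I, ∫⁻ y in I,
        ENNReal.ofReal (u x ^ finrank ℝ E - u y ^ finrank ℝ E) * k x y
      = ∫⁻ x in I, ∫⁻ y in I, ∫⁻ q, F x q y ∂μ := by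
        rw [← lintegral_const_mul' _ _ measure_ball_lt_top.ne]
        refine lintegral_congr fun x => ?_
        rw [← lintegral_const_mul' _ _ measure_ball_lt_top.ne]
        exact lintegral_congr fun y => hannulus x y
    _ = ∫⁻ x in I, ∫⁻ q, (∫⁻ y in I, F x q y) ∂μ :=
        lintegral_congr fun x => lintegral_lintegral_swap (hF x).aemeasurable
    _ = ∫⁻ x in I, ∫⁻ q in {q | ‖q‖ < u x}, (∫⁻ y in {y | u y ≤ ‖q‖} ∩ I, k x y) ∂μ := by
        refine lintegral_congr fun x => ?_
        rw [← lintegral_indicator (measurableSet_lt measurable_norm measurable_const)]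
        refine lintegral_congr fun q => ?_
        by_cases hq : ‖q‖ < u x
        · simpa [F, hq] using setLIntegral_indicator (μ := volume) (t := I)
            (measurableSet_le hu (measurable_const (a := ‖q‖))) (k x)
        · simp [F, hq]
    _ = _ := (setLIntegral_prod_eq_lintegral_setLIntegral
        (measurableSet_lt measurable_snd.norm (hu.comp measurable_fst))
        (measurable_setLIntegral_setOf_le_norm_inter hu I hk)).symm

theorem ofReal_mul_lintegral_ofReal_sub_pow_le {α lam : ℝ} (hα : -1 < α) (hlam : 0 ≤ lam)
    {K : ℝ × E → ℝ}
    (hK : ∀ z : ℝ × E, z ≠ 0 →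
      lam * √(z.1 ^ 2 + ‖z.2‖ ^ 2) ^ (-((finrank ℝ E : ℝ) + 1) - α) ≤ K z)
    {u : ℝ → ℝ} (hu : Measurable u) (hu0 : ∀ t, 0 ≤ u t) (I : Set ℝ) :
    ENNReal.ofReal (lam * 3 ^ (-((finrank ℝ E : ℝ) + 1) - α)) * μ (ball 0 1) *
        (μ (ball 0 1) * ∫⁻ x in I, ∫⁻ y in I, ENNReal.ofReal (u x ^ finrank ℝ E - u y ^ finrank ℝ E)
          * ENNReal.ofReal (|x - y| ^ (-(1 + α)))) ≤
      ∫⁻ z in {z : ℝ × E | ‖z.2‖ < u z.1} ∩ Prod.fst ⁻¹' I,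
        (∫⁻ w in {w : ℝ × E | ‖w.2‖ < u w.1}ᶜ, ENNReal.ofReal (K (z - w)) ∂volume.prod μ)
          ∂volume.prod μ := by
  have hS : MeasurableSet {z : ℝ × E | ‖z.2‖ < u z.1} :=
    measurableSet_lt measurable_snd.norm (hu.comp measurable_fst)
  have hrestrict : (volume.prod μ).restrict ({z : ℝ × E | ‖z.2‖ < u z.1} ∩ Prod.fst ⁻¹' I) =
      ((volume.restrict I).prod μ).restrict {z : ℝ × E | ‖z.2‖ < u z.1} := by
    rw [Measure.restrict_prod_eq_prod_univ, Measure.restrict_restrict hS, prod_univ]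
  rw [addHaar_ball_mul_lintegral_ofReal_sub_pow_mul μ hu hu0 I (by fun_prop), hrestrict,
    ← lintegral_const_mul' _ _ (ENNReal.mul_ne_top ENNReal.ofReal_ne_top measure_ball_lt_top.ne)]
  exact setLIntegral_mono' hS fun z hz =>
    (mul_le_mul_right (lintegral_mono_set inter_subset_left) _).trans
      (mul_setLIntegral_le_setLIntegral_compl μ hα hlam hK hu hz)

end FiniteDimensional

theorem stmt18 (m : ℕ) (hm : 1 ≤ m) (α : ℝ) (hα : α ∈ Set.Ioo (0:ℝ) 1) :
    ∃ C : ℝ, 0 < C ∧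
      ∀ lam : ℝ, 0 < lam →
      ∀ K : ℝ × EuclideanSpace ℝ (Fin m) → ℝ, Measurable K → (∀ x, 0 ≤ K x) →
      (∀ x : ℝ × EuclideanSpace ℝ (Fin m), x ≠ 0 →
        lam * (Real.sqrt (x.1 ^ 2 + ‖x.2‖ ^ 2)) ^ (-((m : ℝ) + 1) - α) ≤ K x) →
      ∀ u : ℝ → ℝ, Measurable u → (∀ s, 0 ≤ u s) → Function.Periodic u (2 * π) →
      perK K {x : ℝ × EuclideanSpace ℝ (Fin m) | ‖x.2‖ < u x.1} ≠ ⊤ →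
      (∫⁻ x in Set.Ioo (-π) π, ∫⁻ y in Set.Ioo (-π) π,
          ENNReal.ofReal (|u x ^ m - u y ^ m| / |x - y| ^ ((1:ℝ) + α))) ≤
        ENNReal.ofReal (C * (1 + (1 / lam) *
          (perK K {x : ℝ × EuclideanSpace ℝ (Fin m) | ‖x.2‖ < u x.1}).toReal)) := by
  have : Nontrivial (EuclideanSpace ℝ (Fin m)) :=
    Module.nontrivial_of_finrank_pos (R := ℝ) (by rw [finrank_euclideanSpace_fin]; omega)
  set B := (volume (ball (0 : EuclideanSpace ℝ (Fin m)) 1)).toReal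
  have hB : 0 < B := ENNReal.toReal_pos (measure_ball_pos _ _ one_pos).ne' measure_ball_lt_top.ne
  set s : ℝ := -((m : ℝ) + 1) - α
  refine ⟨2 / (3 ^ s * B ^ 2), by positivity, fun lam hlam K _ _ hK u hu hu0 _ hfin => ?_⟩
  set P := (perK K {x : ℝ × EuclideanSpace ℝ (Fin m) | ‖x.2‖ < u x.1}).toReal
  have hlower := ofReal_mul_lintegral_ofReal_sub_pow_le volume (by linarith [hα.1] : -1 < α)
    hlam.le (K := K) (by rwa [finrank_euclideanSpace_fin]) hu hu0 (Ioo (-π) π)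
  rw [finrank_euclideanSpace_fin, ← ENNReal.ofReal_toReal measure_ball_lt_top.ne, ← mul_assoc,
    ← ENNReal.ofReal_mul (by positivity), ← ENNReal.ofReal_mul (by positivity)] at hlower
  have hN := ENNReal.le_ofReal_div_of_ofReal_mul_le (by positivity)
    (hlower.trans_eq (ENNReal.ofReal_toReal hfin).symm)
  have hsymmetrize := lintegral_lintegral_ofReal_abs_sub_mul (ν := volume.restrict (Ioo (-π) π))
    (f := fun x => u x ^ m) (by fun_prop) (k := fun x y => ENNReal.ofReal (|x - y| ^ (-(1 + α))))
    (by fun_prop) fun x y => by rw [abs_sub_comm]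
  simp only [div_eq_mul_inv, ← Real.rpow_neg (abs_nonneg _), ENNReal.ofReal_mul (abs_nonneg _)]
  rw [hsymmetrize]
  calc _ ≤ 2 * ENNReal.ofReal (P / (lam * 3 ^ s * B * B)) := by gcongr
    _ = ENNReal.ofReal (2 / (3 ^ s * B ^ 2) * (1 / lam * P)) := by
        rw [← ENNReal.ofReal_ofNat 2, ← ENNReal.ofReal_mul (by norm_num)]
        congr 1
        field_simp
    _ ≤ _ := ENNReal.ofReal_le_ofReal
        (mul_le_mul_of_nonneg_left (le_add_of_nonneg_left zero_le_one) (by positivity))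
end
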